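/- The 6-dimensional Lie algebra g_{6.10}^{a=0} with nonzero brackets [X₂,X₆] = X₁, [X₃,X₆] = X₂, [X₄,X₆] = -X₅, [X₅,X₆] = X₄ admits an invariant symplectic structure: the 2-form ω = ω₁₆ α¹⁶ + ω₂₃ α²³ + ω₂₆ α²⁶ + ω₃₆ α³⁶ + ω₄₅ α⁴⁵ + ω₄₆ α⁴⁶ + ω₅₆ α⁵⁶ is closed for any coefficients, and it is non-degenerate whenever ω₁₆ ω₂₃ ω₄₅ ≠ 0. -/

import Mathlib

/-!
STATEMENT 13: The Lie algebra g_{6.10}^{a=0} with nonzero brackets [X₂,X₆] = X₁,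
[X₃,X₆] = X₂, [X₄,X₆] = −X₅, [X₅,X₆] = X₄ admits an invariant symplectic structure:
the 2-form ω = ω₁₆α¹⁶ + ω₂₃α²³ + ω₂₆α²⁶ + ω₃₆α³⁶ + ω₄₅α⁴⁵ + ω₄₆α⁴⁶ + ω₅₆α⁵⁶
is closed for any coefficients, and non-degenerate whenever ω₁₆ω₂₃ω₄₅ ≠ 0.

The Chevalley–Eilenberg differential (dα(X,Y) = −α([X,Y]) on 1-forms) is determined by
dα¹ = −α²∧α⁶, dα² = −α³∧α⁶, dα⁴ = −α⁵∧α⁶, dα⁵ = α⁴∧α⁶, dα³ = dα⁶ = 0; the complex is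
modeled concretely below (indices shifted down by one).  Non-degeneracy of ω is
expressed as invertibility (nonzero determinant) of its Gram matrix, which for a 2-form
on a 6-dimensional space is equivalent to ω ∧ ω ∧ ω ≠ 0.
-/

open Finset Module

/-- The exterior algebra on six degree-one generators α¹,…,α⁶, as coordinates on the
basis of increasing wedge monomials indexed by subsets of `Fin 6`. -/
abbrev Lam : Type := Finset (Fin 6) → ℝ

/-- The basis monomial α^S. -/
noncomputable def gen (S : Finset (Fin 6)) : Lam := Pi.single S 1

/-- Koszul sign when interleaving (the increasing enumerations of) `T` and `U`:
(−1) to the number of inversions. -/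
def koszulSign (T U : Finset (Fin 6)) : ℝ :=
  (-1 : ℝ) ^ (((T ×ˢ U).filter fun p => p.2 < p.1).card)

/-- The wedge (exterior) product in coordinates. -/
noncomputable def wedge (f h : Lam) : Lam := fun S =>
  ∑ T ∈ S.powerset, koszulSign T (S \ T) * f T * h (S \ T)

/-- The Chevalley–Eilenberg differential: the unique antiderivation with dαⁱ = g i,
given on the basis monomial α^S by d α^S = Σ_{i ∈ S} (−1)^{#{j ∈ S | j < i}} (g i) ∧ α^{S∖i}. -/
noncomputable def ceDiff (g : Fin 6 → Lam) : Lam →ₗ[ℝ] Lam :=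
  (Pi.basisFun ℝ (Finset (Fin 6))).constr ℝ fun S =>
    ∑ i ∈ S, ((-1 : ℝ) ^ ((S.filter fun j => j < i).card)) • wedge (g i) (gen (S.erase i))

/-- The subspace Λᵏ of homogeneous elements of degree `k`. -/
def degSub (k : ℕ) : Submodule ℝ Lam where
  carrier := {f | ∀ S : Finset (Fin 6), S.card ≠ k → f S = 0}
  add_mem' := by
    intro f g hf hg S hS
    simp only [Pi.add_apply, hf S hS, hg S hS, add_zero]
  zero_mem' := by intro S hS; rfl
  smul_mem' := by
    intro c f hf S hS
    simp only [Pi.smul_apply, hf S hS, smul_zero]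

/-- Closed k-forms. -/
noncomputable def Zspace (D : Lam →ₗ[ℝ] Lam) (k : ℕ) : Submodule ℝ Lam :=
  degSub k ⊓ LinearMap.ker D

/-- Exact k-forms (the image of the (k−1)-forms under the differential). -/
noncomputable def Bspace (D : Lam →ₗ[ℝ] Lam) (k : ℕ) : Submodule ℝ Lam :=
  (degSub (k - 1)).map D

/-- The Gram matrix of a 2-form ω: the antisymmetric matrix (ω(Xᵢ,Xⱼ))ᵢⱼ.  A 2-form on a
6-dimensional space is non-degenerate (equivalently ω ∧ ω ∧ ω ≠ 0) iff this matrix is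
invertible, i.e. has nonzero determinant. -/
noncomputable def gram (f : Lam) : Matrix (Fin 6) (Fin 6) ℝ :=
  Matrix.of fun i j => if i < j then f {i, j} else if j < i then -(f {j, i}) else 0


/-- Generator differentials of g_{6.10}^{a=0} (0-indexed). -/
noncomputable def gDiff : Fin 6 → Lam :=
  ![-gen {1, 5}, -gen {2, 5}, 0, -gen {4, 5}, gen {3, 5}, 0]

/-!
Each `dαⁱ` is a multiple of a single monomial `αʲ ∧ α⁶`, so `d(αⁱ ∧ αʲ) = dαⁱ ∧ αʲ − αⁱ ∧ dαʲ`
vanishes as soon as every `dαⁱ` shares an index with the other factor, which is the case for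
the seven monomials of `ω`. The Gram matrix of `ω` is antisymmetric with Pfaffian
`ω₁₆ ω₂₃ ω₄₅`, so its determinant is `(ω₁₆ ω₂₃ ω₄₅)²`.
-/

lemma ceDiff_gen (g : Fin 6 → Lam) (S : Finset (Fin 6)) :
    ceDiff g (gen S) =
      ∑ i ∈ S, ((-1 : ℝ) ^ (S.filter fun j => j < i).card) • wedge (g i) (gen (S.erase i)) := by
  rw [ceDiff, show gen S = Pi.basisFun ℝ (Finset (Fin 6)) S by simp [gen], Basis.constr_basis]

-- Only `T = S \ U` contributes to `(f ∧ α^U)_S`, and then `T` is disjoint from `U`.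
lemma wedge_gen_eq_zero {f : Lam} {U : Finset (Fin 6)} (hf : ∀ T, Disjoint T U → f T = 0) :
    wedge f (gen U) = 0 := by
  funext S
  refine Finset.sum_eq_zero fun T _ => ?_
  by_cases hU : S \ T = U
  · simp [hf T (hU ▸ disjoint_sdiff)]
  · simp [gen, hU]

lemma ceDiff_gen_eq_zero {g : Fin 6 → Lam} {P : Finset (Fin 6 × Finset (Fin 6))}
    (hP : ∀ i T, g i T ≠ 0 → (i, T) ∈ P) {S : Finset (Fin 6)}
    (hS : ∀ p ∈ P, p.1 ∈ S → ¬Disjoint p.2 (S.erase p.1)) :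
    ceDiff g (gen S) = 0 := by
  rw [ceDiff_gen]
  refine Finset.sum_eq_zero fun i hi => ?_
  rw [wedge_gen_eq_zero fun T hT => ?_, smul_zero]
  by_contra hne
  exact hS (i, T) (hP i T hne) hi hT

/-- The pairs `(i, T)` with `α^T` occurring in `dαⁱ`. -/
def gDiffSupport : Finset (Fin 6 × Finset (Fin 6)) :=
  {(0, {1, 5}), (1, {2, 5}), (3, {4, 5}), (4, {3, 5})}

lemma mem_gDiffSupport_of_ne_zero {i : Fin 6} {T : Finset (Fin 6)} (h : gDiff i T ≠ 0) :
    (i, T) ∈ gDiffSupport := by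
  fin_cases i <;> by_cases hT : T = {1, 5} <;> simp_all [gDiff, gDiffSupport, gen, Pi.single_apply]

noncomputable def g610Form (c16 c23 c26 c36 c45 c46 c56 : ℝ) : Lam :=
  c16 • gen {0, 5} + c23 • gen {1, 2} + c26 • gen {1, 5} +
    c36 • gen {2, 5} + c45 • gen {3, 4} + c46 • gen {3, 5} + c56 • gen {4, 5}

lemma ceDiff_g610Form_eq_zero (c16 c23 c26 c36 c45 c46 c56 : ℝ) :
    ceDiff gDiff (g610Form c16 c23 c26 c36 c45 c46 c56) = 0 := by
  have hclosed (S : Finset (Fin 6))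
      (hS : ∀ p ∈ gDiffSupport, p.1 ∈ S → ¬Disjoint p.2 (S.erase p.1)) :
      ceDiff gDiff (gen S) = 0 :=
    ceDiff_gen_eq_zero (fun _ _ => mem_gDiffSupport_of_ne_zero) hS
  simp (disch := decide +kernel) only [g610Form, map_add, map_smul, hclosed, smul_zero, add_zero]

lemma gram_g610Form (c16 c23 c26 c36 c45 c46 c56 : ℝ) :
    gram (g610Form c16 c23 c26 c36 c45 c46 c56) =
      !![0, 0, 0, 0, 0, c16; 0, 0, c23, 0, 0, c26; 0, -c23, 0, 0, 0, c36;
        0, 0, 0, 0, c45, c46; 0, 0, 0, -c45, 0, c56; -c16, -c26, -c36, -c46, -c56, 0] := by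
  ext i j
  simp only [gram, g610Form, Matrix.of_apply, Pi.add_apply, Pi.smul_apply, gen, Pi.single_apply,
    smul_eq_mul]
  fin_cases i <;> fin_cases j <;> simp (config := { decide := true })

-- The Pfaffian of this antisymmetric matrix is `c16 * c23 * c45`.
lemma det_g610Gram (c16 c23 c26 c36 c45 c46 c56 : ℝ) :
    (!![0, 0, 0, 0, 0, c16; 0, 0, c23, 0, 0, c26; 0, -c23, 0, 0, 0, c36;
        0, 0, 0, 0, c45, c46; 0, 0, 0, -c45, 0, c56; -c16, -c26, -c36, -c46, -c56, 0] :
        Matrix (Fin 6) (Fin 6) ℝ).det = (c16 * c23 * c45) ^ 2 := by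
  simp [Matrix.det_succ_row_zero, Fin.sum_univ_succ, Fin.succAbove]
  ring

theorem symplectic_g610 (c16 c23 c26 c36 c45 c46 c56 : ℝ) :
    ceDiff gDiff (c16 • gen {0, 5} + c23 • gen {1, 2} + c26 • gen {1, 5} +
        c36 • gen {2, 5} + c45 • gen {3, 4} + c46 • gen {3, 5} + c56 • gen {4, 5}) = 0 ∧
    (c16 * c23 * c45 ≠ 0 →
      (gram (c16 • gen {0, 5} + c23 • gen {1, 2} + c26 • gen {1, 5} +
        c36 • gen {2, 5} + c45 • gen {3, 4} + c46 • gen {3, 5} + c56 • gen {4, 5})).det ≠ 0) := by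
  refine ⟨ceDiff_g610Form_eq_zero .., fun h => ?_⟩
  rw [← g610Form, gram_g610Form, det_g610Gram]
  exact pow_ne_zero 2 h
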